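/- For every positive integer n there exists a completed play of the ordered Zeckendorf game on n of length exactly n − Z(n); together with the lower bound, the shortest possible completed play on n has length exactly n − Z(n). -/

import Mathlib

/-- Fibonacci numbers indexed so that `F 1 = 1`, `F 2 = 2`,
and `F (i+1) = F i + F (i-1)`. -/
def F (i : ℕ) : ℕ := Nat.fib (i + 1)

/-- A single legal move of the ordered Zeckendorf game, acting on an
adjacent pair of entries of the list of indices. -/
inductive Move : List ℕ → List ℕ → Prop
  | merge (a b : List ℕ) (i : ℕ) (hi : 1 ≤ i) :
      Move (a ++ [i, i + 1] ++ b) (a ++ [i + 2] ++ b)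
  | mergeOnes (a b : List ℕ) :
      Move (a ++ [1, 1] ++ b) (a ++ [2] ++ b)
  | split (a b : List ℕ) (i : ℕ) (hi : 2 < i) :
      Move (a ++ [i, i] ++ b) (a ++ [i - 2, i + 1] ++ b)
  | splitTwos (a b : List ℕ) :
      Move (a ++ [2, 2] ++ b) (a ++ [1, 3] ++ b)
  | switch (a b : List ℕ) (i j : ℕ) (hj : 1 ≤ j) (hij : j < i) :
      Move (a ++ [i, j] ++ b) (a ++ [j, i] ++ b)

/-- A play of the ordered Zeckendorf game on `n` with `m` moves:
the initial state is `n` copies of `1`, and each step is a legal move. -/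
def IsPlay (n : ℕ) (s : ℕ → List ℕ) (m : ℕ) : Prop :=
  s 0 = List.replicate n 1 ∧ ∀ t < m, Move (s t) (s (t + 1))

/-- A state is terminal if no legal move applies to it. -/
def Terminal (S : List ℕ) : Prop := ∀ T, ¬ Move S T

/-- The total Fibonacci value of a state. -/
def val (S : List ℕ) : ℕ := (S.map F).sum

/-- The monovariant `f(S) = Σ_{j=1}^k (k+1−j)·F_{i_j}` (here with
`j` running over 0-based positions, so the weight of position `j` is
`k − j`). -/
def f (S : List ℕ) : ℕ := ∑ j : Fin S.length, (S.length - (j : ℕ)) * F (S.get j)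

/-- `M n` is the maximal number of moves in a completed play of the
ordered Zeckendorf game on `n`. -/
noncomputable def M (n : ℕ) : ℕ :=
  sSup {m | ∃ s : ℕ → List ℕ, IsPlay n s m ∧ Terminal (s m)}

/-- The golden ratio `φ = (1+√5)/2`. -/
noncomputable def phi : ℝ := (1 + Real.sqrt 5) / 2

/-- Logarithm to base `φ`. -/
noncomputable def logphi (x : ℝ) : ℝ := Real.log x / Real.log phi

/-!
Every move preserves the value `val` and the positivity of the entries, and shortens the list
by at most one. A positive state is terminal exactly when its indices increase by at least two
at each step, so by uniqueness of Zeckendorf representations every completed play on `n` ends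
at the Zeckendorf decomposition `L`, after at least `n - L.length` moves. Conversely, `F (i + 2)`
ones are fused into `[i + 2]` in `F (i + 2) - 1` moves by fusing the first `F i` of them into
`[i]`, the remaining `F (i + 1)` into `[i + 1]`, and merging; doing this block by block for the
summands of `L` reaches `L` in exactly `n - L.length` moves.
-/

lemma F_pos (i : ℕ) : 0 < F i := Nat.fib_pos.2 i.succ_pos

lemma F_add_two (i : ℕ) : F (i + 2) = F i + F (i + 1) := Nat.fib_add_two

@[simp] lemma val_nil : val [] = 0 := rfl

@[simp] lemma val_cons (i : ℕ) (S : List ℕ) : val (i :: S) = F i + val S := List.sum_cons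

@[simp] lemma val_append (S T : List ℕ) : val (S ++ T) = val S + val T := by
  simp [val]

@[simp] lemma val_replicate_one (n : ℕ) : val (List.replicate n 1) = n := by
  simp [val, F]

lemma length_le_val (S : List ℕ) : S.length ≤ val S := by
  induction S with
  | nil => simp
  | cons i S ih => have := F_pos i; simp only [List.length_cons, val_cons]; omega

namespace Move

lemma append_left_right {S T : List ℕ} (h : Move S T) (c d : List ℕ) :
    Move (c ++ S ++ d) (c ++ T ++ d) := by
  cases h with
  | merge a b i hi => simpa using merge (c ++ a) (b ++ d) i hi
  | mergeOnes a b => simpa using mergeOnes (c ++ a) (b ++ d)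
  | split a b i hi => simpa using split (c ++ a) (b ++ d) i hi
  | splitTwos a b => simpa using splitTwos (c ++ a) (b ++ d)
  | switch a b i j hj hij => simpa using switch (c ++ a) (b ++ d) i j hj hij

lemma val_eq {S T : List ℕ} (h : Move S T) : val T = val S := by
  have hF : F 1 = 1 ∧ F 2 = 2 ∧ F 3 = 3 := ⟨rfl, rfl, rfl⟩
  cases h with
  | merge a b i _ =>
    have := F_add_two i
    simp only [val_append, val_cons, val_nil]; omega
  | split a b i hi =>
    obtain ⟨k, rfl⟩ : ∃ k, i = k + 3 := ⟨i - 3, by omega⟩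
    have h3 : F (k + 3) = F (k + 1) + F (k + 2) := F_add_two _
    have h4 : F (k + 3 + 1) = F (k + 2) + F (k + 3) := F_add_two _
    simp only [val_append, val_cons, val_nil, show k + 3 - 2 = k + 1 by omega]; omega
  | mergeOnes | splitTwos | switch => simp only [val_append, val_cons, val_nil]; omega

lemma forall_one_le {S T : List ℕ} (h : Move S T) (hS : ∀ x ∈ S, 1 ≤ x) : ∀ x ∈ T, 1 ≤ x := by
  cases h <;>
    simp only [List.forall_mem_append, List.forall_mem_cons] at hS ⊢ <;>
    grind

lemma length_le {S T : List ℕ} (h : Move S T) : S.length ≤ T.length + 1 := by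
  cases h <;> simp only [List.length_append, List.length_cons, List.length_nil] <;> omega

lemma exists_adjacent_lt_add_two {S T : List ℕ} (h : Move S T) :
    ∃ a b x y, S = a ++ [x, y] ++ b ∧ y < x + 2 := by
  cases h with
  | merge a b i => exact ⟨a, b, i, i + 1, rfl, by omega⟩
  | mergeOnes a b => exact ⟨a, b, 1, 1, rfl, by omega⟩
  | split a b i => exact ⟨a, b, i, i, rfl, by omega⟩
  | splitTwos a b => exact ⟨a, b, 2, 2, rfl, by omega⟩
  | switch a b i j _ hij => exact ⟨a, b, i, j, rfl, hij.trans (by omega)⟩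

lemma exists_of_lt_add_two {x y : ℕ} (hx : 1 ≤ x) (hy : 1 ≤ y) (hxy : y < x + 2)
    (a b : List ℕ) : ∃ T, Move (a ++ [x, y] ++ b) T := by
  obtain hlt | rfl | hgt := lt_trichotomy x y
  · obtain rfl : y = x + 1 := by omega
    exact ⟨_, merge a b x hx⟩
  · obtain rfl | rfl | h2 : x = 1 ∨ x = 2 ∨ 2 < x := by omega
    · exact ⟨_, mergeOnes a b⟩
    · exact ⟨_, splitTwos a b⟩
    · exact ⟨_, split a b x h2⟩
  · exact ⟨_, switch a b x y hy hgt⟩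

end Move

lemma terminal_of_isChain {S : List ℕ} (hS : S.IsChain (fun a b => a + 2 ≤ b)) : Terminal S := by
  intro T hT
  obtain ⟨a, b, x, y, rfl, hxy⟩ := hT.exists_adjacent_lt_add_two
  have := List.isChain_iff_forall_rel_of_append_cons_cons.1 hS
    (show a ++ [x, y] ++ b = a ++ x :: y :: b by simp)
  omega

lemma isChain_of_terminal {S : List ℕ} (hpos : ∀ x ∈ S, 1 ≤ x) (hS : Terminal S) :
    S.IsChain (fun a b => a + 2 ≤ b) := by
  refine List.isChain_iff_forall_rel_of_append_cons_cons.2 fun x y a b hab => ?_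
  by_contra hxy
  subst hab
  obtain ⟨T, hT⟩ :=
    Move.exists_of_lt_add_two (hpos x (by simp)) (hpos y (by simp)) (by omega) a b
  exact hS T (by simpa using hT)

-- Mathlib's Zeckendorf representations are decreasing lists of `Nat.fib` indices.
lemma isZeckendorfRep_reverse_map_succ {L : List ℕ} (hpos : ∀ x ∈ L, 1 ≤ x)
    (hgap : L.IsChain (fun a b => a + 2 ≤ b)) : (L.map (· + 1)).reverse.IsZeckendorfRep := by
  rw [List.IsZeckendorfRep, ← List.reverse_cons, List.isChain_reverse, List.isChain_cons,
    List.isChain_map]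
  refine ⟨fun y hy => ?_, hgap.imp fun a b h => by omega⟩
  cases L with
  | nil => simp at hy
  | cons c L => simp at hy; have := hpos c (by simp); omega

lemma zeckendorf_val {L : List ℕ} (hpos : ∀ x ∈ L, 1 ≤ x)
    (hgap : L.IsChain (fun a b => a + 2 ≤ b)) :
    Nat.zeckendorf (val L) = (L.map (· + 1)).reverse := by
  convert Nat.zeckendorf_sum_fib (isZeckendorfRep_reverse_map_succ hpos hgap) using 2
  simp only [val, List.map_reverse, List.sum_reverse, List.map_map]
  rfl

lemma eq_of_val_eq {L L' : List ℕ} (hpos : ∀ x ∈ L, 1 ≤ x) (hpos' : ∀ x ∈ L', 1 ≤ x)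
    (hgap : L.IsChain (fun a b => a + 2 ≤ b)) (hgap' : L'.IsChain (fun a b => a + 2 ≤ b))
    (hv : val L = val L') : L = L' := by
  have h := zeckendorf_val hpos hgap
  rw [hv, zeckendorf_val hpos' hgap', List.reverse_inj] at h
  exact List.map_injective_iff.2 (add_left_injective 1) h.symm

inductive Reach : ℕ → List ℕ → List ℕ → Prop
  | refl (S : List ℕ) : Reach 0 S S
  | tail {m : ℕ} {S T U : List ℕ} : Reach m S T → Move T U → Reach (m + 1) S U

namespace Reach

lemma single {S T : List ℕ} (h : Move S T) : Reach 1 S T := (refl S).tail h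

lemma trans {m m' : ℕ} {S T U : List ℕ} (h : Reach m S T) (h' : Reach m' T U) :
    Reach (m + m') S U := by
  induction h' with
  | refl => exact h
  | tail _ hmove ih => exact (ih h).tail hmove

lemma append_left_right {m : ℕ} {S T : List ℕ} (h : Reach m S T) (c d : List ℕ) :
    Reach m (c ++ S ++ d) (c ++ T ++ d) := by
  induction h with
  | refl => exact refl _
  | tail _ hmove ih => exact ih.tail (hmove.append_left_right c d)

lemma append {m m' : ℕ} {S T S' T' : List ℕ} (h : Reach m S T) (h' : Reach m' S' T') :
    Reach (m + m') (S ++ S') (T ++ T') := by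
  have h₁ : Reach m (S ++ S') (T ++ S') := by simpa using h.append_left_right [] S'
  have h₂ : Reach m' (T ++ S') (T ++ T') := by simpa using h'.append_left_right T []
  exact h₁.trans h₂

lemma val_eq {m : ℕ} {S T : List ℕ} (h : Reach m S T) : val T = val S := by
  induction h with
  | refl => rfl
  | tail _ hmove ih => rw [hmove.val_eq, ih]

lemma forall_one_le {m : ℕ} {S T : List ℕ} (h : Reach m S T) (hS : ∀ x ∈ S, 1 ≤ x) :
    ∀ x ∈ T, 1 ≤ x := by
  induction h with
  | refl => exact hS
  | tail _ hmove ih => exact hmove.forall_one_le (ih hS)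

lemma length_le {m : ℕ} {S T : List ℕ} (h : Reach m S T) : S.length ≤ T.length + m := by
  induction h with
  | refl => simp
  | tail _ hmove ih => have := hmove.length_le; omega

lemma iff_exists_seq {m : ℕ} {S T : List ℕ} :
    Reach m S T ↔ ∃ s : ℕ → List ℕ, s 0 = S ∧ s m = T ∧ ∀ t < m, Move (s t) (s (t + 1)) := by
  constructor
  · intro h
    induction h with
    | refl S => exact ⟨fun _ => S, rfl, rfl, by simp⟩
    | @tail m S T U _ hmove ih =>
      obtain ⟨s, h0, hm, hs⟩ := ih
      refine ⟨fun t => if t ≤ m then s t else U, by simpa using h0, by simp, fun t ht => ?_⟩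
      obtain ht | rfl := Nat.lt_succ_iff_lt_or_eq.1 ht
      · simpa [ht.le, Nat.succ_le_of_lt ht] using hs t ht
      · simpa [hm] using hmove
  · rintro ⟨s, rfl, rfl, hs⟩
    suffices ∀ k ≤ m, Reach k (s 0) (s k) from this m le_rfl
    intro k hk
    induction k with
    | zero => exact refl _
    | succ k ih => exact (ih (by omega)).tail (hs k (by omega))

end Reach

lemma reach_replicate_F_singleton :
    ∀ i, Reach (F (i + 1) - 1) (List.replicate (F (i + 1)) 1) [i + 1]
  | 0 => Reach.refl [1]
  | 1 => Reach.single (Move.mergeOnes [] [])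
  | k + 2 => by
    have h₁ := reach_replicate_F_singleton k
    have h₂ : Reach (F (k + 2) - 1) (List.replicate (F (k + 2)) 1) [k + 2] :=
      reach_replicate_F_singleton (k + 1)
    have hmerge : Reach 1 [k + 1, k + 2] [k + 3] :=
      Reach.single (Move.merge [] [] (k + 1) (by omega))
    have hF : F (k + 2 + 1) = F (k + 1) + F (k + 2) := F_add_two (k + 1)
    have := F_pos (k + 1)
    have := F_pos (k + 2)
    rw [hF, List.replicate_add]
    convert (h₁.append h₂).trans hmerge using 1
    omega

lemma reach_replicate_val {L : List ℕ} (hpos : ∀ x ∈ L, 1 ≤ x) :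
    Reach (val L - L.length) (List.replicate (val L) 1) L := by
  induction L with
  | nil => exact Reach.refl []
  | cons i L ih =>
    obtain ⟨j, rfl⟩ : ∃ j, i = j + 1 := ⟨i - 1, by have := hpos i (by simp); omega⟩
    have h : Reach _ _ ((j + 1) :: L) :=
      (reach_replicate_F_singleton j).append (ih fun x hx => hpos x (by simp [hx]))
    have := F_pos (j + 1)
    have := length_le_val L
    rw [val_cons, List.replicate_add]
    convert h using 1
    simp only [List.length_cons]; omega

theorem stmt_12_general (n : ℕ) (L : List ℕ)
    (hpos : ∀ x ∈ L, 1 ≤ x)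
    (hgap : List.Chain' (fun a b => a + 2 ≤ b) L)
    (hsum : val L = n) :
    (∃ s : ℕ → List ℕ, IsPlay n s (n - L.length) ∧ Terminal (s (n - L.length))) ∧
    (∀ (s : ℕ → List ℕ) (m : ℕ), IsPlay n s m → Terminal (s m) → n - L.length ≤ m) := by
  subst hsum
  constructor
  · obtain ⟨s, h0, hm, hs⟩ := Reach.iff_exists_seq.1 (reach_replicate_val hpos)
    refine ⟨s, ⟨h0, hs⟩, ?_⟩
    rw [hm]
    exact terminal_of_isChain hgap
  · rintro s m ⟨h0, hs⟩ hterm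
    have hreach : Reach m (List.replicate (val L) 1) (s m) :=
      Reach.iff_exists_seq.2 ⟨s, h0, rfl, hs⟩
    have hpos_end := hreach.forall_one_le (by simp [List.mem_replicate])
    have hL : s m = L := eq_of_val_eq hpos_end hpos (isChain_of_terminal hpos_end hterm) hgap
      (by rw [hreach.val_eq, val_replicate_one])
    have := hreach.length_le
    simp only [List.length_replicate, hL] at this
    omega

theorem stmt_12 (n : ℕ) (hn : 1 ≤ n) (L : List ℕ)
    (hpos : ∀ x ∈ L, 1 ≤ x)
    (hgap : List.Chain' (fun a b => a + 2 ≤ b) L)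
    (hsum : val L = n) :
    (∃ s : ℕ → List ℕ, IsPlay n s (n - L.length) ∧ Terminal (s (n - L.length))) ∧
    (∀ (s : ℕ → List ℕ) (m : ℕ), IsPlay n s m → Terminal (s m) → n - L.length ≤ m) :=
  stmt_12_general n L hpos hgap hsum
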